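/- arXiv:1307.5582 — 6 statements merged into one kernel-verified Lean document; each statement's English description precedes it below -/
import Mathlib

section
/- Let (V,d) be a metric space, u, v ∈ V with d(u,v) ≤ r where r ≤ A_u/4 and A_u := d(u,T) > 0 for a finite terminal set T. Let t, t' ∈ T with d(u,t) ≤ 2·A_u. Then d(v,t)/d(v,t') - d(u,t)/d(u,t') ≤ 6r/A_u, assuming d(u,t') ≥ A_u (which holds since t' ∈ T). -/
/-- Ratio-Lipschitz estimate: for `u, v` with `d(u,v) ≤ r ≤ A_u/4` (where
`A_u = d(u,T) > 0`), and terminals `t, t' ∈ T` with `d(u,t) ≤ 2A_u`, we have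
`d(v,t)/d(v,t') - d(u,t)/d(u,t') ≤ 6r/A_u`. -/
theorem stmt_5 {V : Type*} [MetricSpace V] (T : Finset V) (u v t t' : V)
    (ht : t ∈ T) (ht' : t' ∈ T) (r : ℝ)
    (hA : 0 < Metric.infDist u (T : Set V))
    (hr : r ≤ Metric.infDist u (T : Set V) / 4)
    (huv : dist u v ≤ r)
    (hut : dist u t ≤ 2 * Metric.infDist u (T : Set V)) :
    dist v t / dist v t' - dist u t / dist u t'
      ≤ 6 * r / Metric.infDist u (T : Set V) := by
  set A := Metric.infDist u (T : Set V) with hAdef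
  have hAt : A ≤ dist u t := Metric.infDist_le_dist_of_mem (by exact_mod_cast ht)
  have hAt' : A ≤ dist u t' := Metric.infDist_le_dist_of_mem (by exact_mod_cast ht')
  have hr0 : (0:ℝ) ≤ r := le_trans dist_nonneg huv
  have hy : dist u t' - r ≤ dist v t' := by
    have h := dist_triangle u v t'
    linarith
  have hx : dist v t ≤ dist u t + r := by
    have h := dist_triangle v u t
    rw [dist_comm v u] at h
    linarith
  have hbr : 0 < dist u t' - r := by linarith
  have hypos : 0 < dist v t' := lt_of_lt_of_le hbr hy
  have hbpos : 0 < dist u t' := by linarith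
  have h1 : dist v t / dist v t' ≤ (dist u t + r) / (dist u t' - r) :=
    div_le_div₀ (by linarith [dist_nonneg (x := u) (y := t)]) hx hbr hy
  have key : (dist u t + r) / (dist u t' - r) - dist u t / dist u t'
      ≤ 6 * r / A := by
    rw [div_sub_div _ _ (ne_of_gt hbr) (ne_of_gt hbpos),
      div_le_div_iff₀ (by positivity) hA]
    nlinarith [mul_nonneg hr0 (mul_pos hbpos hbpos).le,
      mul_nonneg hr0 (sub_nonneg.2 hAt'),
      mul_nonneg (mul_nonneg hr0 (sub_nonneg.2 hAt')) hbpos.le,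
      mul_nonneg (mul_nonneg hr0 hbpos.le) (by linarith : (0:ℝ) ≤ dist u t' - 4*r)]
  linarith
end

section
/- Let (V,d) be a metric space with finite terminal set T, and rates ρ̂_t ≥ 1 fixed for all t ∈ T \ {t*}. Define the critical threshold ρ̄_{t*}(x) := d(x,t*) · max_{t ≠ t*} ρ̂_t / d(x,t). If u, v ∈ V satisfy d(u,v) ≤ r with r ≤ A_u/4 (A_u = d(u,T) > 0) and d(u,t*) ≤ 2·A_u, then ρ̄_{t*}(v) - ρ̄_{t*}(u) ≤ 12r/A_u. -/
/-- Threshold Lipschitz lemma: with rates `ρ̂_t ∈ [1,2]` for `t ∈ T \ {t*}`, the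
critical threshold `ρ̄_{t*}(x) = d(x,t*)·max_{t ≠ t*} ρ̂_t/d(x,t)` satisfies
`ρ̄_{t*}(v) - ρ̄_{t*}(u) ≤ 12r/A_u` whenever `d(u,v) ≤ r ≤ A_u/4` (with
`A_u = d(u,T) > 0`) and `d(u,t*) ≤ 2A_u`. -/
theorem stmt_6 {V : Type*} [MetricSpace V] [DecidableEq V] (T : Finset V) (tstar : V)
    (htstar : tstar ∈ T) (hne : (T.erase tstar).Nonempty)
    (ρ : V → ℝ) (hρ : ∀ t ∈ T.erase tstar, ρ t ∈ Set.Icc (1 : ℝ) 2)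
    (u v : V) (r : ℝ)
    (hA : 0 < Metric.infDist u (T : Set V))
    (hr : r ≤ Metric.infDist u (T : Set V) / 4)
    (huv : dist u v ≤ r)
    (hut : dist u tstar ≤ 2 * Metric.infDist u (T : Set V)) :
    dist v tstar * (T.erase tstar).sup' hne (fun t => ρ t / dist v t)
      - dist u tstar * (T.erase tstar).sup' hne (fun t => ρ t / dist u t)
      ≤ 12 * r / Metric.infDist u (T : Set V) := by
  set A := Metric.infDist u (T : Set V) with hAdef
  obtain ⟨t, htT, hts⟩ := Finset.exists_mem_eq_sup' hne (fun t => ρ t / dist v t)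
  have htT' : t ∈ T := Finset.mem_of_mem_erase htT
  obtain ⟨hρ1, hρ2⟩ := hρ t htT
  have hAt : A ≤ dist u t := Metric.infDist_le_dist_of_mem (by exact_mod_cast htT')
  have hr0 : (0:ℝ) ≤ r := le_trans dist_nonneg huv
  have hvt : dist u t - r ≤ dist v t := by
    have h := dist_triangle u v t
    linarith
  have hbr : (0:ℝ) < dist u t - r := by linarith
  have hvt0 : (0:ℝ) < dist v t := lt_of_lt_of_le hbr hvt
  have hut0 : (0:ℝ) < dist u t := by linarith
  have hvts : dist v tstar ≤ dist u tstar + r := by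
    have h := dist_triangle v u tstar
    rw [dist_comm v u] at h; linarith
  have hMu : ρ t / dist u t ≤ (T.erase tstar).sup' hne (fun t => ρ t / dist u t) :=
    Finset.le_sup' (fun t => ρ t / dist u t) htT
  rw [hts]
  have h1 : dist v tstar * (ρ t / dist v t) ≤ (dist u tstar + r) * (ρ t / (dist u t - r)) := by
    apply mul_le_mul hvts (div_le_div_of_nonneg_left (by linarith) hbr hvt)
      (by positivity) (by linarith [dist_nonneg (x := u) (y := tstar)])
  have h2 : dist u tstar * (ρ t / dist u t) ≤
      dist u tstar * (T.erase tstar).sup' hne (fun t => ρ t / dist u t) :=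
    mul_le_mul_of_nonneg_left hMu dist_nonneg
  have h3 : (dist u tstar + r) * (ρ t / (dist u t - r)) - dist u tstar * (ρ t / dist u t)
      ≤ 12 * r / A := by
    set a := dist u tstar
    set b := dist u t
    have ha0 : (0:ℝ) ≤ a := dist_nonneg
    rw [← mul_div_assoc, ← mul_div_assoc, div_sub_div _ _ (ne_of_gt hbr) (ne_of_gt hut0),
      div_le_div_iff₀ (by positivity) hA]
    have h5 : 0 ≤ (2 - ρ t) * (r * ((a + b) * A)) :=
      mul_nonneg (by linarith) (mul_nonneg hr0 (mul_nonneg (by linarith) hA.le))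
    have h6 : 0 ≤ (2 * b - a) * (r * A) :=
      mul_nonneg (by linarith) (mul_nonneg hr0 hA.le)
    have h7 : 0 ≤ (r * b) * (4 * (b - r) - 3 * A) := by
      apply mul_nonneg (mul_nonneg hr0 hut0.le); linarith
    have h8 : 0 ≤ (r * b) * A := mul_nonneg (mul_nonneg hr0 hut0.le) hA.le
    nlinarith [h5, h6, h7, h8]
  linarith
end

section
/- Let ν ~ TExp(λ, 1) with λ = ln K, K ≥ 3, and let ρ = 1 + ν. For any threshold θ with θ ≤ 2 - 1/λ and δ > 0 with θ + δ ≤ 2: Pr[ρ ∈ [θ, θ+δ) | ρ ≥ θ] ≤ 2δλ. -/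
/-!
Shifting by `1`, we must bound `ν [θ-1, θ-1+δ)` against `ν [θ-1, ∞)`. Put `p = max (θ-1) 0`.
Up to the normalising constant `c`, the density `λ e^{-λx}` gives the numerator at most
`c (e^{-λp} - e^{-λ(p+δ)}) ≤ c λ δ e^{-λp}`, and the denominator at least
`c (e^{-λp} - e^{-λ})`. Memorylessness makes `e^{-λ} = e^{-λp} e^{-λ(1-p)}`, and since
`λ (1 - p) ≥ 1` this is at most `e^{-λp} / 2`, so the denominator is at least `c e^{-λp} / 2`.
-/

open MeasureTheory

/-- The truncated exponential distribution `TExp(λ,γ)`: the exponential distribution with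
rate `λ` conditioned on being at most `γ`. -/
noncomputable def texp (l g : ℝ) : Measure ℝ :=
  (volume.restrict (Set.Icc (0 : ℝ) g)).withDensity
    (fun x => ENNReal.ofReal ((1 - Real.exp (-(l * g)))⁻¹ * l * Real.exp (-(l * x))))

open Real Set

instance (l g : ℝ) : NullSingletonClass (texp l g) := by
  unfold texp; infer_instance

lemma inv_one_sub_exp_neg_nonneg {x : ℝ} (hx : 0 ≤ x) : 0 ≤ (1 - exp (-x))⁻¹ :=
  inv_nonneg.mpr (sub_nonneg.mpr (exp_le_one_iff.mpr (neg_nonpos.mpr hx)))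

lemma exp_neg_mul_sub_exp_neg_mul_le (l p q : ℝ) :
    exp (-(l * p)) - exp (-(l * q)) ≤ l * (q - p) * exp (-(l * p)) := by
  have hsplit : exp (-(l * q)) = exp (-(l * p)) * exp (-(l * (q - p))) := by
    rw [← exp_add]; ring_nf
  have := add_one_le_exp (-(l * (q - p)))
  rw [hsplit]
  nlinarith [exp_pos (-(l * p))]

lemma exp_neg_mul_le_half {l p g : ℝ} (hl : 0 < l) (hpg : p ≤ g - 1 / l) :
    exp (-(l * g)) ≤ exp (-(l * p)) / 2 := by
  have hsplit : exp (-(l * g)) = exp (-(l * p)) * exp (-(l * (g - p))) := by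
    rw [← exp_add]; ring_nf
  have hgap : 1 ≤ l * (g - p) := by
    rw [le_sub_iff_add_le, ← le_sub_iff_add_le', div_le_iff₀ hl] at hpg
    linarith
  have htail : exp (-(l * (g - p))) ≤ 1 / 2 :=
    (exp_le_exp.mpr (neg_le_neg hgap)).trans exp_neg_one_lt_half.le
  rw [hsplit]
  nlinarith [exp_pos (-(l * p))]

lemma ae_mem_Ioc_texp (l g : ℝ) : ∀ᵐ x ∂texp l g, x ∈ Ioc 0 g := by
  have hIcc : ∀ᵐ x ∂texp l g, x ∈ Icc 0 g :=
    (withDensity_absolutelyContinuous _ _).ae_le (ae_restrict_mem measurableSet_Icc)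
  filter_upwards [hIcc, (Ioc_ae_eq_Icc (μ := texp l g)).mem_iff] with x hx hiff
  exact hiff.mpr hx

lemma texp_Ioc {l p q g : ℝ} (hl : 0 ≤ l) (hp : 0 ≤ p) (hpq : p ≤ q) (hqg : q ≤ g) :
    texp l g (Ioc p q) =
      ENNReal.ofReal ((1 - exp (-(l * g)))⁻¹ * (exp (-(l * p)) - exp (-(l * q)))) := by
  set c := (1 - exp (-(l * g)))⁻¹
  have hc : 0 ≤ c := inv_one_sub_exp_neg_nonneg (mul_nonneg hl (hp.trans (hpq.trans hqg)))
  have hsub : Ioc p q ∩ Icc 0 g = Ioc p q :=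
    inter_eq_left.mpr fun x hx => ⟨hp.trans hx.1.le, hx.2.trans hqg⟩
  have hcont : Continuous fun x => c * l * exp (-(l * x)) := by fun_prop
  have hderiv : ∀ x, HasDerivAt (fun y => -(c * exp (-(l * y)))) (c * l * exp (-(l * x))) x :=
    fun x => (((hasDerivAt_id' x).const_mul l).neg.exp.const_mul c).neg.congr_deriv (by simp; ring)
  rw [texp, withDensity_apply _ measurableSet_Ioc, Measure.restrict_restrict measurableSet_Ioc,
    hsub, ← ofReal_integral_eq_lintegral_ofReal hcont.integrableOn_Ioc
      (Filter.Eventually.of_forall fun x => by positivity),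
    ← intervalIntegral.integral_of_le hpq,
    intervalIntegral.integral_eq_sub_of_hasDerivAt (fun x _ => hderiv x)
      (hcont.intervalIntegrable p q)]
  ring_nf

theorem texp_Ioc_le_mul {l p q g : ℝ} (hl : 0 < l) (hp : 0 ≤ p) (hpq : p ≤ q) (hqg : q ≤ g)
    (hpg : p ≤ g - 1 / l) :
    texp l g (Ioc p q) ≤ ENNReal.ofReal (2 * l * (q - p)) * texp l g (Ioc p g) := by
  have hlen : 0 ≤ l * (q - p) := mul_nonneg hl.le (sub_nonneg.mpr hpq)
  have hc := inv_one_sub_exp_neg_nonneg (mul_nonneg hl.le (hp.trans (hpq.trans hqg)))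
  have htail := exp_neg_mul_le_half hl hpg
  rw [texp_Ioc hl.le hp hpq hqg, texp_Ioc hl.le hp (hpq.trans hqg) le_rfl,
    ← ENNReal.ofReal_mul (by linarith)]
  refine ENNReal.ofReal_le_ofReal ?_
  calc (1 - exp (-(l * g)))⁻¹ * (exp (-(l * p)) - exp (-(l * q)))
      ≤ (1 - exp (-(l * g)))⁻¹ * (l * (q - p) * exp (-(l * p))) := by
        gcongr; exact exp_neg_mul_sub_exp_neg_mul_le l p q
    _ ≤ (1 - exp (-(l * g)))⁻¹ * (l * (q - p) * (2 * (exp (-(l * p)) - exp (-(l * g))))) := by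
        gcongr; linarith
    _ = 2 * l * (q - p) * ((1 - exp (-(l * g)))⁻¹ * (exp (-(l * p)) - exp (-(l * g)))) := by
        ring

/-- Let `ν ~ TExp(λ,1)` with `λ = ln K`, `K ≥ 3`, and `ρ = 1 + ν`. For a threshold
`θ ≤ 2 - 1/λ` and `δ > 0` with `θ + δ ≤ 2`:
`Pr[ρ ∈ [θ, θ+δ) | ρ ≥ θ] ≤ 2δλ`. -/
theorem stmt_8 (K θ δ : ℝ) (hK : 3 ≤ K) (hθ : θ ≤ 2 - 1 / Real.log K)
    (hδ : 0 < δ) (hθδ : θ + δ ≤ 2) :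
    (texp (Real.log K) 1).map (fun x => 1 + x) (Set.Ico θ (θ + δ))
        / (texp (Real.log K) 1).map (fun x => 1 + x) (Set.Ici θ)
      ≤ ENNReal.ofReal (2 * δ * Real.log K) := by
  set l := log K
  have hl : 1 ≤ l := by
    rw [le_log_iff_exp_le (by linarith)]
    linarith [exp_one_lt_d9]
  rw [Measure.map_apply (measurable_const_add 1) measurableSet_Ico,
    Measure.map_apply (measurable_const_add 1) measurableSet_Ici,
    preimage_const_add_Ico, preimage_const_add_Ici]
  set p := max (θ - 1) 0
  set q := max (θ + δ - 1) p
  have hl0 : 0 < l := by linarith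
  have hp1 : p ≤ 1 - 1 / l := max_le (by linarith) (sub_nonneg.mpr ((div_le_one hl0).mpr hl))
  have hq1 : q ≤ 1 := max_le (by linarith) (hp1.trans (sub_le_self _ (by positivity)))
  have hqp : q - p ≤ δ := by
    rw [sub_le_iff_le_add]
    exact max_le (by linarith [le_max_left (θ - 1) 0]) (by linarith)
  refine ENNReal.div_le_of_le_mul ?_
  calc texp l 1 (Ico (θ - 1) (θ + δ - 1))
      = texp l 1 (Ioc (θ - 1) (θ + δ - 1)) := measure_congr Ico_ae_eq_Ioc
    _ ≤ texp l 1 (Ioc p q) := measure_mono_ae <| by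
        filter_upwards [ae_mem_Ioc_texp l 1] with x hx hxab
        exact ⟨max_lt hxab.1 hx.1, le_max_of_le_left hxab.2⟩
    _ ≤ ENNReal.ofReal (2 * l * (q - p)) * texp l 1 (Ioc p 1) :=
        texp_Ioc_le_mul hl0 (le_max_right _ _) (le_max_right _ _) hq1 hp1
    _ ≤ ENNReal.ofReal (2 * δ * l) * texp l 1 (Ici (θ - 1)) :=
        mul_le_mul' (ENNReal.ofReal_le_ofReal (by nlinarith))
          (measure_mono fun x hx => (le_max_left _ _).trans hx.1.le)
end

section
/- Let ν ~ TExp(λ, 1) with λ = ln K, K ≥ 3, and let ρ = 1 + ν. For any threshold θ > 2 - 1/λ and δ > 0: Pr[ρ ∈ [θ, θ+δ)] ≤ 2δλ·e^{1-λ} = 2eδλ/K. -/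
open MeasureTheory

/-- Let `ν ~ TExp(λ,1)` with `λ = ln K`, `K ≥ 3`, and `ρ = 1 + ν`. For any threshold
`θ > 2 - 1/λ` and `δ > 0`: `Pr[ρ ∈ [θ, θ+δ)] ≤ 2δλ·e^{1-λ} = 2eδλ/K`. -/
theorem stmt_9 (K θ δ : ℝ) (hK : 3 ≤ K) (hθ : 2 - 1 / Real.log K < θ) (hδ : 0 < δ) :
    (texp (Real.log K) 1).map (fun x => 1 + x) (Set.Ico θ (θ + δ))
      ≤ ENNReal.ofReal (2 * δ * Real.log K * Real.exp (1 - Real.log K)) ∧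
    ENNReal.ofReal (2 * δ * Real.log K * Real.exp (1 - Real.log K))
      = ENNReal.ofReal (2 * Real.exp 1 * δ * Real.log K / K) := by
  set l := Real.log K with hldef
  have hK0 : (0:ℝ) < K := by linarith
  have hl1 : 1 < l := by
    rw [hldef, Real.lt_log_iff_exp_lt hK0]
    linarith [Real.exp_one_lt_d9]
  have hl0 : (0:ℝ) < l := by linarith
  constructor
  · rw [Measure.map_apply (by fun_prop : Measurable fun x : ℝ => 1 + x) measurableSet_Ico]
    have hpre : (fun x => 1 + x) ⁻¹' Set.Ico θ (θ + δ) = Set.Ico (θ - 1) (θ - 1 + δ) := by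
      ext x
      simp only [Set.mem_preimage, Set.mem_Ico]
      constructor <;> rintro ⟨h1, h2⟩ <;> constructor <;> linarith
    rw [hpre]
    unfold texp
    rw [withDensity_apply _ measurableSet_Ico,
      Measure.restrict_restrict measurableSet_Ico]
    have hbound : ∀ x ∈ Set.Ico (θ - 1) (θ - 1 + δ) ∩ Set.Icc (0:ℝ) 1,
        ENNReal.ofReal ((1 - Real.exp (-(l * 1)))⁻¹ * l * Real.exp (-(l * x)))
          ≤ ENNReal.ofReal (2 * l * Real.exp (1 - l)) := by
      rintro x ⟨⟨hx1, _⟩, _⟩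
      apply ENNReal.ofReal_le_ofReal
      have he1 : Real.exp (-(l * 1)) < 1 / 2 := by
        rw [mul_one]
        have h1 : Real.exp (-l) < Real.exp (-1) := by
          apply Real.exp_lt_exp.mpr; linarith
        have h2 : Real.exp (-1) < 1 / 2 := by
          rw [Real.exp_neg]
          rw [inv_lt_comm₀ (Real.exp_pos 1) (by norm_num)]
          norm_num
          linarith [Real.exp_one_gt_d9]
        linarith
      have hc : (1 - Real.exp (-(l * 1)))⁻¹ ≤ 2 := by
        rw [inv_le_comm₀ (by linarith) (by norm_num)]
        linarith
      have hcpos : (0:ℝ) < (1 - Real.exp (-(l * 1)))⁻¹ := by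
        apply inv_pos.mpr; linarith
      have hinv : l * (1 / l) = 1 := by field_simp
      have hxlb : l - 1 ≤ l * x := by nlinarith
      have hexp : Real.exp (-(l * x)) ≤ Real.exp (1 - l) := by
        apply Real.exp_le_exp.mpr; linarith
      have hexppos := Real.exp_pos (-(l * x))
      have h1 : (1 - Real.exp (-(l * 1)))⁻¹ * Real.exp (-(l * x))
          ≤ 2 * Real.exp (1 - l) :=
        mul_le_mul hc hexp hexppos.le (by norm_num)
      nlinarith [mul_le_mul_of_nonneg_left h1 hl0.le]
    calc ∫⁻ x in Set.Ico (θ - 1) (θ - 1 + δ) ∩ Set.Icc (0:ℝ) 1,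
            ENNReal.ofReal ((1 - Real.exp (-(l * 1)))⁻¹ * l * Real.exp (-(l * x)))
        ≤ ∫⁻ _ in Set.Ico (θ - 1) (θ - 1 + δ) ∩ Set.Icc (0:ℝ) 1,
            ENNReal.ofReal (2 * l * Real.exp (1 - l)) :=
          setLIntegral_mono measurable_const hbound
      _ = ENNReal.ofReal (2 * l * Real.exp (1 - l)) *
            volume (Set.Ico (θ - 1) (θ - 1 + δ) ∩ Set.Icc (0:ℝ) 1) := by
          rw [setLIntegral_const]
      _ ≤ ENNReal.ofReal (2 * l * Real.exp (1 - l)) *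
            volume (Set.Ico (θ - 1) (θ - 1 + δ)) := by
          gcongr
          exact Set.inter_subset_left
      _ = ENNReal.ofReal (2 * l * Real.exp (1 - l)) * ENNReal.ofReal δ := by
          rw [Real.volume_Ico]; ring_nf
      _ = ENNReal.ofReal (2 * δ * l * Real.exp (1 - l)) := by
          rw [← ENNReal.ofReal_mul (by positivity)]
          ring_nf
  · congr 1
    rw [Real.exp_sub, Real.exp_log hK0]
    ring
end

section
/- Let (V,d) be a metric space, Δ > 0, T a Δ/10-net of V, and let f : Ω → (V → T) be a random 2-proximate terminal partitioning with stretch α, i.e., d(x,f(x)) ≤ 2·d(x,T) always, and Pr[f(x) ≠ f(y)] ≤ α·d(x,y)/min(d(x,T), d(y,T)) whenever d(x,T), d(y,T) > 0. Then the induced random partition of V into clusters f^{-1}(t) has all clusters of diameter at most Δ, and for every pair x, y ∈ V, Pr[x, y in different clusters] ≤ 100·max(α,1)·d(x,y)/Δ. -/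
open MeasureTheory ProbabilityTheory

/-- A random 2-proximate terminal partitioning with stretch `α` into a `Δ/10`-net yields a
low-diameter decomposition: every cluster has diameter at most `Δ`, and every pair `x, y`
is separated with probability at most `100·max(α,1)·d(x,y)/Δ`. -/
theorem stmt_14 {V : Type*} [MetricSpace V] {Ω : Type*} [MeasureSpace Ω]
    [IsProbabilityMeasure (ℙ : Measure Ω)]
    (Δ α : ℝ) (hΔ : 0 < Δ) (hα : 0 < α) (T : Set V)
    (hcover : ∀ v : V, Metric.infDist v T ≤ Δ / 10)
    (hsep : ∀ t₁ ∈ T, ∀ t₂ ∈ T, t₁ ≠ t₂ → Δ / 10 ≤ dist t₁ t₂)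
    (f : Ω → V → V) (hfT : ∀ ω x, f ω x ∈ T)
    (hprox : ∀ ω x, dist x (f ω x) ≤ 2 * Metric.infDist x T)
    (hstretch : ∀ x y : V, 0 < Metric.infDist x T → 0 < Metric.infDist y T →
      ℙ {ω | f ω x ≠ f ω y} ≤ ENNReal.ofReal
        (α * dist x y / min (Metric.infDist x T) (Metric.infDist y T))) :
    (∀ ω, ∀ x y : V, f ω x = f ω y → dist x y ≤ Δ) ∧
    (∀ x y : V, ℙ {ω | f ω x ≠ f ω y}
      ≤ ENNReal.ofReal (100 * max α 1 * dist x y / Δ)) := by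
  have hT_eq : ∀ t₁ ∈ T, ∀ t₂ ∈ T, dist t₁ t₂ < Δ / 10 → t₁ = t₂ := by
    intro t₁ h₁ t₂ h₂ hd
    by_contra hne
    exact absurd (hsep t₁ h₁ t₂ h₂ hne) (not_le.mpr hd)
  have key : ∀ x y : V, dist x y < Δ / 100 → Metric.infDist x T < Δ / 100 →
      ∀ ω, f ω x = f ω y := by
    intro x y hd hA ω
    apply hT_eq _ (hfT ω x) _ (hfT ω y)
    have hAy : Metric.infDist y T ≤ Metric.infDist x T + dist y x :=
      Metric.infDist_le_infDist_add_dist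
    have h4 := dist_triangle4 (f ω x) x y (f ω y)
    have hpx := hprox ω x
    have hpy := hprox ω y
    rw [dist_comm x (f ω x)] at hpx
    rw [dist_comm y x] at hAy
    linarith
  constructor
  · intro ω x y hxy
    have h := dist_triangle x (f ω x) y
    have hpx := hprox ω x
    have hpy := hprox ω y
    have hcx := hcover x
    have hcy := hcover y
    rw [hxy, dist_comm (f ω y) y] at h
    rw [hxy] at hpx
    linarith
  · intro x y
    by_cases hd : dist x y < Δ / 100
    · by_cases hx : Metric.infDist x T < Δ / 100
      · have hempty : {ω | f ω x ≠ f ω y} = ∅ := by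
          ext ω; simp [key x y hd hx ω]
        rw [hempty]
        simp
      · by_cases hy : Metric.infDist y T < Δ / 100
        · have hempty : {ω | f ω x ≠ f ω y} = ∅ := by
            ext ω
            have := key y x (by rwa [dist_comm]) hy ω
            simp [this.symm]
          rw [hempty]
          simp
        · push_neg at hx hy
          have hx0 : 0 < Metric.infDist x T := lt_of_lt_of_le (by linarith) hx
          have hy0 : 0 < Metric.infDist y T := lt_of_lt_of_le (by linarith) hy
          refine (hstretch x y hx0 hy0).trans (ENNReal.ofReal_le_ofReal ?_)
          have hmin : Δ / 100 ≤ min (Metric.infDist x T) (Metric.infDist y T) :=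
            le_min hx hy
          have hmin0 : 0 < min (Metric.infDist x T) (Metric.infDist y T) :=
            lt_of_lt_of_le (by linarith) hmin
          rw [div_le_div_iff₀ hmin0 hΔ]
          have hmax : α ≤ max α 1 := le_max_left α 1
          have hdn : (0:ℝ) ≤ dist x y := dist_nonneg
          have h1 : 0 ≤ (max α 1 - α) * (dist x y * Δ) :=
            mul_nonneg (by linarith) (mul_nonneg hdn hΔ.le)
          have h2 : 0 ≤ (100 * max α 1 * dist x y) *
              (min (Metric.infDist x T) (Metric.infDist y T) - Δ / 100) :=
            mul_nonneg (by positivity) (by linarith)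
          nlinarith
    · push_neg at hd
      refine le_trans prob_le_one ?_
      rw [show (1 : ENNReal) = ENNReal.ofReal 1 by simp]
      apply ENNReal.ofReal_le_ofReal
      rw [le_div_iff₀ hΔ]
      have hmax : (1:ℝ) ≤ max α 1 := le_max_right α 1
      nlinarith
end

section
/- Let K ≥ 3, λ = ln K, and let ρ = 1 + ν where ν ~ TExp(λ,1). Suppose a point u has critical threshold ρ̄(u) ∈ [1,2] and the threshold over a ball B(u,r) varies by at most δ (i.e., ρ̄(v) ≤ ρ̄(u) + δ for all v ∈ B(u,r)), with ρ̄(u) + δ ≤ 2 or truncation handled. Then Pr[ρ ∈ [ρ̄(u), ρ̄(u)+δ)] ≤ Pr[ρ ≥ ρ̄(u)]·2δλ + 2eδλ/K. -/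
/-!
Write `ν = ρ - 1 ~ TExp(λ, 1)` with density `f`, and `t = θ - 1 ≥ 0`. Since `f` is decreasing,
`Pr[ν ∈ [t, t + δ)] ≤ f(t) δ`. If `t + 1/λ ≤ 1`, then `Pr[ν ≥ t]` is at least the mass of
`[t, t + 1/λ]`, which is exactly `f(t) (1 - e⁻¹) / λ ≥ f(t) / (2λ)`; this is the conditional
bound. Otherwise `t > 1 - 1/λ`, so `f(t) = (1 - 1/K)⁻¹ λ e^{-λt} ≤ 2λ e^{1-λ} = 2eλ/K`.
-/

open MeasureTheory

open Real Set

noncomputable def texpDensity (l g x : ℝ) : ℝ :=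
  (1 - exp (-(l * g)))⁻¹ * l * exp (-(l * x))

theorem integral_exp_neg_mul {l : ℝ} (hl : l ≠ 0) (a b : ℝ) :
    ∫ x in a..b, exp (-(l * x)) = (exp (-(l * a)) - exp (-(l * b))) / l := by
  have hderiv : ∀ x, HasDerivAt (fun x => -exp (-(l * x)) / l) (exp (-(l * x))) x := by
    intro x
    refine (((hasDerivAt_id x).const_mul l).neg.exp.neg.div_const l).congr_deriv ?_
    field_simp
    rfl
  rw [intervalIntegral.integral_eq_sub_of_hasDerivAt (fun x _ => hderiv x)
    (by apply Continuous.intervalIntegrable; fun_prop)]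
  ring

section texp

variable {l g : ℝ}

theorem texp_apply {s : Set ℝ} (hs : MeasurableSet s) :
    texp l g s = ∫⁻ x in s ∩ Icc 0 g, ENNReal.ofReal (texpDensity l g x) := by
  rw [texp, withDensity_apply _ hs, Measure.restrict_restrict hs]
  rfl

theorem texpDensity_nonneg (hl : 0 ≤ l) (hg : 0 ≤ g) (x : ℝ) : 0 ≤ texpDensity l g x := by
  have hexp : exp (-(l * g)) ≤ 1 := exp_le_one_iff.2 (by nlinarith)
  have hnorm : 0 ≤ (1 - exp (-(l * g)))⁻¹ := inv_nonneg.2 (by linarith)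
  unfold texpDensity
  positivity

theorem texpDensity_antitone (hl : 0 ≤ l) (hg : 0 ≤ g) : Antitone (texpDensity l g) := by
  intro x y hxy
  have hc : 0 ≤ (1 - exp (-(l * g)))⁻¹ * l := by
    simpa [texpDensity] using texpDensity_nonneg hl hg 0
  exact mul_le_mul_of_nonneg_left (exp_le_exp.2 (by nlinarith)) hc

theorem texp_Ico_le (hl : 0 ≤ l) (hg : 0 ≤ g) (a b : ℝ) :
    texp l g (Ico a b) ≤ ENNReal.ofReal (texpDensity l g a) * ENNReal.ofReal (b - a) := by
  rw [texp_apply measurableSet_Ico]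
  calc ∫⁻ x in Ico a b ∩ Icc 0 g, ENNReal.ofReal (texpDensity l g x)
      ≤ ∫⁻ _ in Ico a b ∩ Icc 0 g, ENNReal.ofReal (texpDensity l g a) :=
        setLIntegral_mono measurable_const fun x hx =>
          ENNReal.ofReal_le_ofReal (texpDensity_antitone hl hg hx.1.1)
    _ ≤ ENNReal.ofReal (texpDensity l g a) * volume (Ico a b) := by
        rw [setLIntegral_const]
        gcongr
        exact inter_subset_left
    _ = ENNReal.ofReal (texpDensity l g a) * ENNReal.ofReal (b - a) := by
        rw [Real.volume_Ico]

theorem texp_Icc (hl : 0 < l) {a b : ℝ} (ha : 0 ≤ a) (hab : a ≤ b) (hb : b ≤ g) :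
    texp l g (Icc a b)
      = ENNReal.ofReal ((1 - exp (-(l * g)))⁻¹ * (exp (-(l * a)) - exp (-(l * b)))) := by
  have hg : 0 ≤ g := ha.trans (hab.trans hb)
  rw [texp_apply measurableSet_Icc, inter_eq_left.2 (Icc_subset_Icc ha hb),
    ← ofReal_integral_eq_lintegral_ofReal
      (Continuous.integrableOn_Icc (by unfold texpDensity; fun_prop))
      (Filter.Eventually.of_forall (texpDensity_nonneg hl.le hg)),
    integral_Icc_eq_integral_Ioc, ← intervalIntegral.integral_of_le hab]
  unfold texpDensity
  rw [intervalIntegral.integral_const_mul, integral_exp_neg_mul hl.ne']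
  field_simp

theorem ofReal_texpDensity_le_texp_Ici (hl : 0 < l) {a : ℝ} (ha : 0 ≤ a) (hag : a + 1 / l ≤ g) :
    ENNReal.ofReal (texpDensity l g a / l * (1 - exp (-1))) ≤ texp l g (Ici a) := by
  have hstep : a ≤ a + 1 / l := by simp [hl.le]
  calc ENNReal.ofReal (texpDensity l g a / l * (1 - exp (-1)))
      = texp l g (Icc a (a + 1 / l)) := by
        rw [texp_Icc hl ha hstep hag, texpDensity, mul_add, mul_one_div_cancel hl.ne', neg_add,
          exp_add]
        congr 1
        field_simp
    _ ≤ texp l g (Ici a) := measure_mono Icc_subset_Ici_self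

theorem texp_Ico_le_texp_Ici_mul (hl : 0 < l) {a b : ℝ} (ha : 0 ≤ a) (hab : a ≤ b)
    (hag : a + 1 / l ≤ g) :
    texp l g (Ico a b) ≤ texp l g (Ici a) * ENNReal.ofReal (2 * (b - a) * l) := by
  have hg : 0 ≤ g := by linarith [one_div_pos.2 hl]
  have hdens := texpDensity_nonneg hl.le hg a
  calc texp l g (Ico a b) ≤ ENNReal.ofReal (texpDensity l g a) * ENNReal.ofReal (b - a) :=
        texp_Ico_le hl.le hg a b
    _ ≤ ENNReal.ofReal (texpDensity l g a / l * (1 - exp (-1)))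
          * ENNReal.ofReal (2 * (b - a) * l) := by
        have htwo : 1 ≤ 2 * (1 - exp (-1)) := by linarith [exp_neg_one_lt_half]
        have hsub : 0 ≤ 1 - exp (-1) := by linarith
        rw [← ENNReal.ofReal_mul hdens, ← ENNReal.ofReal_mul (by positivity)]
        apply ENNReal.ofReal_le_ofReal
        calc texpDensity l g a * (b - a) ≤ texpDensity l g a * (b - a) * (2 * (1 - exp (-1))) :=
              le_mul_of_one_le_right (by nlinarith) htwo
          _ = _ := by field_simp
    _ ≤ texp l g (Ici a) * ENNReal.ofReal (2 * (b - a) * l) := by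
        gcongr
        exact ofReal_texpDensity_le_texp_Ici hl ha hag

end texp

theorem texpDensity_log_le {K x : ℝ} (hK : 2 ≤ K) (hx : 1 - 1 / log K < x) :
    texpDensity (log K) 1 x ≤ 2 * exp 1 * log K / K := by
  have hK0 : 0 < K := by linarith
  have hl : 0 < log K := log_pos (by linarith)
  have hnorm : (1 - exp (-(log K * 1)))⁻¹ ≤ 2 := by
    rw [mul_one, exp_neg, exp_log hK0]
    refine inv_le_of_inv_le₀ (by norm_num) ?_
    have : K⁻¹ ≤ 2⁻¹ := inv_anti₀ (by norm_num) hK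
    linarith
  have htail : exp (-(log K * x)) ≤ exp 1 / K := by
    have := mul_lt_mul_of_pos_left hx hl
    rw [mul_sub, mul_one, mul_one_div_cancel hl.ne'] at this
    rw [← exp_log hK0, ← exp_sub, exp_log hK0]
    exact exp_le_exp.2 (by linarith)
  unfold texpDensity
  calc (1 - exp (-(log K * 1)))⁻¹ * log K * exp (-(log K * x))
      = (1 - exp (-(log K * 1)))⁻¹ * exp (-(log K * x)) * log K := by ring
    _ ≤ 2 * (exp 1 / K) * log K := by gcongr
    _ = 2 * exp 1 * log K / K := by ring

theorem stmt_19_general (K θ δ : ℝ) (hK : 3 ≤ K) (hθ1 : 1 ≤ θ) :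
    (texp (Real.log K) 1).map (fun x => 1 + x) (Set.Ico θ (θ + δ))
      ≤ (texp (Real.log K) 1).map (fun x => 1 + x) (Set.Ici θ)
          * ENNReal.ofReal (2 * δ * Real.log K)
        + ENNReal.ofReal (2 * Real.exp 1 * δ * Real.log K / K) := by
  rcases le_or_gt δ 0 with hδ | hδ
  · simp [Ico_eq_empty_of_le (by linarith : θ + δ ≤ θ)]
  have hl : 0 < log K := log_pos (by linarith)
  rw [Measure.map_apply (measurable_const_add 1) measurableSet_Ico,
    Measure.map_apply (measurable_const_add 1) measurableSet_Ici,
    preimage_const_add_Ico, preimage_const_add_Ici, show θ + δ - 1 = θ - 1 + δ by ring]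
  by_cases hθ : θ - 1 + 1 / log K ≤ 1
  · have hcond := texp_Ico_le_texp_Ici_mul hl (sub_nonneg.2 hθ1) (le_add_of_nonneg_right hδ.le) hθ
    rw [add_sub_cancel_left] at hcond
    exact hcond.trans le_self_add
  · calc texp (log K) 1 (Ico (θ - 1) (θ - 1 + δ))
        ≤ ENNReal.ofReal (texpDensity (log K) 1 (θ - 1)) * ENNReal.ofReal δ := by
          simpa only [add_sub_cancel_left] using texp_Ico_le hl.le zero_le_one (θ - 1) (θ - 1 + δ)
      _ ≤ ENNReal.ofReal (2 * exp 1 * log K / K) * ENNReal.ofReal δ := by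
          gcongr
          exact texpDensity_log_le (by linarith) (by linarith)
      _ = ENNReal.ofReal (2 * exp 1 * δ * log K / K) := by
          rw [← ENNReal.ofReal_mul (by positivity)]
          ring_nf
      _ ≤ _ := le_add_self

/-- Let `K ≥ 3`, `λ = ln K`, and `ρ = 1 + ν` with `ν ~ TExp(λ,1)`. For a critical
threshold `θ ∈ [1,2]` and `δ > 0`:
`Pr[ρ ∈ [θ, θ+δ)] ≤ Pr[ρ ≥ θ]·2δλ + 2eδλ/K` (combining the two threshold regimes). -/
theorem stmt_19 (K θ δ : ℝ) (hK : 3 ≤ K) (hθ1 : 1 ≤ θ) (hθ2 : θ ≤ 2) (hδ : 0 < δ) :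
    (texp (Real.log K) 1).map (fun x => 1 + x) (Set.Ico θ (θ + δ))
      ≤ (texp (Real.log K) 1).map (fun x => 1 + x) (Set.Ici θ)
          * ENNReal.ofReal (2 * δ * Real.log K)
        + ENNReal.ofReal (2 * Real.exp 1 * δ * Real.log K / K) :=
  stmt_19_general K θ δ hK hθ1
end
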